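/- arXiv:2310.13504 — 6 statements merged into one kernel-verified Lean document; each statement's English description precedes it below -/
import Mathlib

section
/- For every integer t ≥ 4, the signed graph (G_{2t},σ) is flow-admissible and admits a nowhere-zero 4-flow but admits no nowhere-zero 3-flow. -/
/-!
Basic framework: finite signed multigraphs given by half-edge incidence,
orientations (bidirections), integer and group-valued flows.
-/

structure SignedGraph where
  V : Type
  E : Type
  fintypeV : Fintype V
  fintypeE : Fintype E
  decV : DecidableEq V
  decE : DecidableEq E
  /-- `ends e true` and `ends e false` are the two endpoints of the edge `e`
  (one for each of its two half-edges). -/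
  ends : E → Bool → V
  /-- the signature, with values in `{1, -1}` -/
  sign : E → ℤ
  sign_unit : ∀ e, sign e = 1 ∨ sign e = -1

attribute [instance] SignedGraph.fintypeV SignedGraph.fintypeE SignedGraph.decV SignedGraph.decE

namespace SignedGraph

variable (G : SignedGraph)

/-- the edge `e` joins the vertices `u` and `v` -/
def EdgeEnds (e : G.E) (u v : G.V) : Prop :=
  (G.ends e true = u ∧ G.ends e false = v) ∨ (G.ends e true = v ∧ G.ends e false = u)

def Adj (u v : G.V) : Prop := ∃ e, G.EdgeEnds e u v

def Reach : G.V → G.V → Prop := Relation.ReflTransGen G.Adj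

/-- An orientation `τ` assigns `1` or `-1` to each half-edge `(e, b)`,
with the product of the two values on an edge equal to `-σ(e)`. -/
def IsOrientation (τ : G.E → Bool → ℤ) : Prop :=
  (∀ e b, τ e b = 1 ∨ τ e b = -1) ∧ ∀ e, τ e true * τ e false = -G.sign e

/-- `f : E → A` is an `A`-flow with respect to the orientation `τ`:
at every vertex the signed values on incident half-edges sum to zero. -/
def IsFlow {A : Type} [AddCommGroup A] (τ : G.E → Bool → ℤ) (f : G.E → A) : Prop :=
  G.IsOrientation τ ∧
    ∀ v : G.V, (∑ e : G.E, ∑ b : Bool, if G.ends e b = v then τ e b • f e else 0) = 0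

/-- an integer `k`-flow -/
def IsIntFlow (k : ℤ) (τ : G.E → Bool → ℤ) (f : G.E → ℤ) : Prop :=
  G.IsFlow τ f ∧ ∀ e, |f e| < k

def NowhereZero {A : Type} [Zero A] (f : G.E → A) : Prop := ∀ e, f e ≠ 0

/-- `(G,σ)` admits a nowhere-zero integer `k`-flow -/
def HasNZFlow (k : ℤ) : Prop := ∃ τ f, G.IsIntFlow k τ f ∧ G.NowhereZero f

def FlowAdmissible : Prop := ∃ k : ℤ, 0 < k ∧ G.HasNZFlow k

def Connected : Prop := Nonempty G.V ∧ ∀ u v : G.V, G.Reach u v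

/-- a circuit of length `n`, as a cyclic sequence of distinct vertices and distinct edges -/
def IsCircuit (n : ℕ) (v : Fin n → G.V) (e : Fin n → G.E) : Prop :=
  0 < n ∧ Function.Injective v ∧ Function.Injective e ∧
    ∀ i : Fin n, G.EdgeEnds (e i) (v i) (v (finRotate n i))

/-- a circuit with an even number of negative edges -/
def BalancedCircuit (n : ℕ) (v : Fin n → G.V) (e : Fin n → G.E) : Prop :=
  G.IsCircuit n v e ∧ (∏ i, G.sign (e i)) = 1

def UnbalancedCircuit (n : ℕ) (v : Fin n → G.V) (e : Fin n → G.E) : Prop :=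
  G.IsCircuit n v e ∧ (∏ i, G.sign (e i)) = -1

/-- a path with `n` edges and `n+1` distinct vertices -/
def IsPath (n : ℕ) (v : Fin (n + 1) → G.V) (e : Fin n → G.E) : Prop :=
  Function.Injective v ∧ Function.Injective e ∧
    ∀ i : Fin n, G.EdgeEnds (e i) (v i.castSucc) (v i.succ)

/-- two edges with the same pair of endpoints -/
def Parallel (e e' : G.E) : Prop := ∃ u v, G.EdgeEnds e u v ∧ G.EdgeEnds e' u v

/-- `T` is the edge set of a triangle -/
def IsTriangle (T : Finset G.E) : Prop :=
  ∃ (a b c : G.V) (e1 e2 e3 : G.E),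
    a ≠ b ∧ b ≠ c ∧ a ≠ c ∧ e1 ≠ e2 ∧ e2 ≠ e3 ∧ e1 ≠ e3 ∧
    T = {e1, e2, e3} ∧ G.EdgeEnds e1 a b ∧ G.EdgeEnds e2 b c ∧ G.EdgeEnds e3 a c

def BalancedTriangle (T : Finset G.E) : Prop :=
  G.IsTriangle T ∧ (∏ e ∈ T, G.sign e) = 1

def UnbalancedTriangle (T : Finset G.E) : Prop :=
  G.IsTriangle T ∧ (∏ e ∈ T, G.sign e) = -1

/-- a triangle-path `T₁T₂⋯T_m` (each triangle given by its edge set) -/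
def IsTrianglePath (m : ℕ) (T : Fin m → Finset G.E) : Prop :=
  0 < m ∧ (∀ i, G.IsTriangle (T i)) ∧ Function.Injective T ∧
    (∀ i j : Fin m, j.val = i.val + 1 → (T i ∩ T j).card = 1) ∧
    (∀ i j : Fin m, i.val + 1 < j.val → T i ∩ T j = ∅)

def TriangularlyConnected : Prop :=
  G.Connected ∧ ∀ e e' : G.E, ¬G.Parallel e e' →
    ∃ (m : ℕ) (T : Fin m → Finset G.E) (hm : 0 < m),
      G.IsTrianglePath m T ∧ e ∈ T ⟨0, hm⟩ ∧ e' ∈ T ⟨m - 1, Nat.sub_lt hm one_pos⟩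

/-- adjacency in the graph obtained by deleting the edges in `F` -/
def AdjAvoid (F : Set G.E) (u v : G.V) : Prop := ∃ e, e ∉ F ∧ G.EdgeEnds e u v

/-- reachability in the graph obtained by deleting the edges in `F` -/
def ReachAvoid (F : Set G.E) : G.V → G.V → Prop := Relation.ReflTransGen (G.AdjAvoid F)

/-- `b` is a bridge (cut-edge) of `G` -/
def IsBridge (b : G.E) : Prop := ¬G.ReachAvoid {b} (G.ends b true) (G.ends b false)

/-- `b` is a bridge of the graph `G - F` -/
def IsBridgeAvoid (F : Set G.E) (b : G.E) : Prop :=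
  b ∉ F ∧ ¬G.ReachAvoid (F ∪ {b}) (G.ends b true) (G.ends b false)

/-- degree of a vertex: the number of half-edges at it (loops counted twice) -/
def deg (v : G.V) : ℕ :=
  (Finset.univ.filter fun p : G.E × Bool => G.ends p.1 p.2 = v).card

/-- degree of a vertex in `G - F` -/
def degAvoid (F : Finset G.E) (v : G.V) : ℕ :=
  (Finset.univ.filter fun p : G.E × Bool => p.1 ∉ F ∧ G.ends p.1 p.2 = v).card

/-- two edge-disjoint unbalanced circuits meeting at exactly one vertex -/
def ShortBarbell (n1 n2 : ℕ) (v1 : Fin n1 → G.V) (e1 : Fin n1 → G.E)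
    (v2 : Fin n2 → G.V) (e2 : Fin n2 → G.E) : Prop :=
  G.UnbalancedCircuit n1 v1 e1 ∧ G.UnbalancedCircuit n2 v2 e2 ∧
    Set.range e1 ∩ Set.range e2 = ∅ ∧ ∃ w, Set.range v1 ∩ Set.range v2 = {w}

/-- two vertex-disjoint unbalanced circuits joined by a path with at least one edge
meeting the circuits only at its endpoints -/
def LongBarbell (n1 n2 p : ℕ) (v1 : Fin n1 → G.V) (e1 : Fin n1 → G.E)
    (v2 : Fin n2 → G.V) (e2 : Fin n2 → G.E)
    (vp : Fin (p + 1) → G.V) (ep : Fin p → G.E) : Prop :=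
  G.UnbalancedCircuit n1 v1 e1 ∧ G.UnbalancedCircuit n2 v2 e2 ∧
    0 < p ∧ G.IsPath p vp ep ∧
    Set.range v1 ∩ Set.range v2 = ∅ ∧
    vp 0 ∈ Set.range v1 ∧ vp (Fin.last p) ∈ Set.range v2 ∧
    (∀ i : Fin (p + 1), i ≠ 0 → vp i ∉ Set.range v1) ∧
    (∀ i : Fin (p + 1), i ≠ Fin.last p → vp i ∉ Set.range v2) ∧
    Set.range ep ∩ Set.range e1 = ∅ ∧ Set.range ep ∩ Set.range e2 = ∅

end SignedGraph

namespace SignedGraph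

/-- The signed graph `(G_{2t}, σ)` of Section 4 (vertices `Sum.inl i = x_{i+1}`,
`Sum.inr i = y_{i+1}`).  Edges: `.inl i` is `x_{i+1}x_{i+2}` (indices mod `t`),
`.inr (.inl i)` is `y_{i+1}y_{i+2}`, `.inr (.inr (.inl i))` is `y_{i+1}x_{i+1}` and
`.inr (.inr (.inr i))` is `y_{i+1}x_{i+2}`.  Negative edges: `x₁x₂`, `y₁y₂` and
all edges `yᵢxᵢ`, `yᵢx_{i+1}` except `y₁x₂`. -/
def Gdbl (t : ℕ) : SignedGraph where
  V := Fin t ⊕ Fin t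
  E := Fin t ⊕ (Fin t ⊕ (Fin t ⊕ Fin t))
  fintypeV := inferInstance
  fintypeE := inferInstance
  decV := inferInstance
  decE := inferInstance
  ends := fun e b =>
    match e with
    | Sum.inl i =>
        if b then Sum.inl i else Sum.inl ⟨(i.val + 1) % t, Nat.mod_lt _ i.pos⟩
    | Sum.inr (Sum.inl i) =>
        if b then Sum.inr i else Sum.inr ⟨(i.val + 1) % t, Nat.mod_lt _ i.pos⟩
    | Sum.inr (Sum.inr (Sum.inl i)) =>
        if b then Sum.inr i else Sum.inl i
    | Sum.inr (Sum.inr (Sum.inr i)) =>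
        if b then Sum.inr i else Sum.inl ⟨(i.val + 1) % t, Nat.mod_lt _ i.pos⟩
  sign := fun e =>
    match e with
    | Sum.inl i => if i.val = 0 then -1 else 1
    | Sum.inr (Sum.inl i) => if i.val = 0 then -1 else 1
    | Sum.inr (Sum.inr (Sum.inl _)) => -1
    | Sum.inr (Sum.inr (Sum.inr i)) => if i.val = 0 then 1 else -1
  sign_unit := by
    rintro (i | i | i | i) <;> dsimp only <;>
      first
        | (split_ifs <;> simp)
        | simp

end SignedGraph

/-!
The nowhere-zero 4-flow is explicit. Against a nowhere-zero 3-flow: `G_{2t}` is 4-regular, and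
reducing a nowhere-zero 3-flow modulo 3 to values `±1` gives at each vertex four terms `±1` whose
sum is a multiple of 3, hence 0; so the graph would have a nowhere-zero 2-flow. Summing the flow
conditions of a `±1`-flow over all vertices, a positive edge contributes 0 and a negative edge
`±2`, so the number of negative edges is even. But `G_{2t}` has `2t + 1` negative edges.
-/

lemma sum_eq_zero_of_card_eq_four_of_three_dvd {α : Type*} {s : Finset α} {g : α → ℤ}
    (hs : s.card = 4) (hg : ∀ a ∈ s, g a = 1 ∨ g a = -1) (h3 : 3 ∣ ∑ a ∈ s, g a) :
    ∑ a ∈ s, g a = 0 := by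
  have hsum : ∑ a ∈ s, g a = ∑ a ∈ s, (2 * (if g a = 1 then 1 else 0) - 1) :=
    Finset.sum_congr rfl fun a ha => by rcases hg a ha with h | h <;> simp [h]
  rw [Finset.sum_sub_distrib, ← Finset.mul_sum, ← Finset.natCast_card_filter] at hsum
  simp only [Finset.sum_const, hs, nsmul_eq_mul, Nat.cast_ofNat, mul_one] at hsum
  have := Finset.card_filter_le s fun a => g a = 1
  omega

namespace SignedGraph

variable (G : SignedGraph)

lemma sum_incident_eq_sum_filter {M : Type} [AddCommMonoid M] (F : G.E → Bool → M) (v : G.V) :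
    (∑ e : G.E, ∑ b : Bool, if G.ends e b = v then F e b else 0) =
      ∑ p ∈ Finset.univ.filter (fun p : G.E × Bool => G.ends p.1 p.2 = v), F p.1 p.2 := by
  rw [Finset.sum_filter, ← Fintype.sum_prod_type']

lemma sum_sum_incident {M : Type} [AddCommMonoid M] (F : G.E → Bool → M) :
    (∑ v : G.V, ∑ e : G.E, ∑ b : Bool, if G.ends e b = v then F e b else 0) =
      ∑ e : G.E, (F e true + F e false) := by
  rw [Finset.sum_comm]
  refine Finset.sum_congr rfl fun e _ => ?_
  rw [Finset.sum_comm]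
  simp

variable {G}

lemma IsFlow.sum_orientation_sum_mul_eq_zero {τ : G.E → Bool → ℤ} {f : G.E → ℤ}
    (h : G.IsFlow τ f) : ∑ e : G.E, (τ e true + τ e false) * f e = 0 := by
  calc ∑ e : G.E, (τ e true + τ e false) * f e
      = ∑ e : G.E, (τ e true • f e + τ e false • f e) := by simp only [smul_eq_mul, add_mul]
    _ = ∑ v : G.V, ∑ e : G.E, ∑ b : Bool, if G.ends e b = v then τ e b • f e else 0 :=
      (G.sum_sum_incident fun e b => τ e b • f e).symm
    _ = 0 := Finset.sum_eq_zero fun v _ => h.2 v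

lemma four_dvd_orientation_sum_mul_sub {a b c σ : ℤ} (ha : a = 1 ∨ a = -1)
    (hb : b = 1 ∨ b = -1) (hc : c = 1 ∨ c = -1) (h : a * b = -σ) :
    4 ∣ (a + b) * c - (1 - σ) := by
  rcases ha with rfl | rfl <;> rcases hb with rfl | rfl <;> rcases hc with rfl | rfl <;> omega

theorem even_card_negative_of_hasNZFlow_two (h : G.HasNZFlow 2) :
    Even (Finset.univ.filter fun e => G.sign e = -1).card := by
  obtain ⟨τ, f, ⟨hflow, hbound⟩, hnz⟩ := h
  have hf : ∀ e, f e = 1 ∨ f e = -1 := fun e => by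
    have := hbound e; have := hnz e; rw [abs_lt] at *; omega
  have hdvd : 4 ∣ ∑ e : G.E, ((τ e true + τ e false) * f e - (1 - G.sign e)) :=
    Finset.dvd_sum fun e _ => four_dvd_orientation_sum_mul_sub
      (hflow.1.1 e true) (hflow.1.1 e false) (hf e) (hflow.1.2 e)
  have hneg : ∑ e : G.E, (1 - G.sign e) =
      2 * ((Finset.univ.filter fun e => G.sign e = -1).card : ℤ) := by
    rw [Finset.natCast_card_filter, Finset.mul_sum]
    refine Finset.sum_congr rfl fun e _ => ?_
    rcases G.sign_unit e with h | h <;> simp [h]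
  rw [Finset.sum_sub_distrib, hflow.sum_orientation_sum_mul_eq_zero, hneg] at hdvd
  rw [Nat.even_iff]
  omega

theorem hasNZFlow_two_of_hasNZFlow_three (hdeg : ∀ v, G.deg v = 4) (h : G.HasNZFlow 3) :
    G.HasNZFlow 2 := by
  obtain ⟨τ, f, ⟨hflow, hbound⟩, hnz⟩ := h
  set s : G.E → ℤ := fun e => if f e % 3 = 1 then 1 else -1 with hs
  have hs_unit : ∀ e, s e = 1 ∨ s e = -1 := fun e => by simp only [hs]; split <;> simp
  have hs_mod : ∀ e, 3 ∣ f e - s e := fun e => by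
    have := hbound e; have := hnz e; rw [abs_lt] at *; simp only [hs]; split <;> omega
  refine ⟨τ, s, ⟨⟨hflow.1, fun v => ?_⟩, fun e => ?_⟩, fun e => ?_⟩
  · have hv := hflow.2 v
    simp only [smul_eq_mul, sum_incident_eq_sum_filter] at hv ⊢
    refine sum_eq_zero_of_card_eq_four_of_three_dvd (hdeg v) (fun p _ => ?_) ?_
    · rcases hflow.1.1 p.1 p.2 with h | h <;> rcases hs_unit p.1 with h' | h' <;> simp [h, h']
    · have hdiff : 3 ∣ ∑ p ∈ Finset.univ.filter (fun p : G.E × Bool => G.ends p.1 p.2 = v),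
          (τ p.1 p.2 * f p.1 - τ p.1 p.2 * s p.1) :=
        Finset.dvd_sum fun p _ => by rw [← mul_sub]; exact (hs_mod p.1).mul_left _
      rwa [Finset.sum_sub_distrib, hv, zero_sub, dvd_neg] at hdiff
  · rcases hs_unit e with h | h <;> simp [h]
  · rcases hs_unit e with h | h <;> simp [h]

theorem not_hasNZFlow_three_of_deg_eq_four (hdeg : ∀ v, G.deg v = 4)
    (hodd : Odd (Finset.univ.filter fun e => G.sign e = -1).card) : ¬ G.HasNZFlow 3 :=
  fun h => Nat.not_even_iff_odd.2 hodd (even_card_negative_of_hasNZFlow_two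
    (hasNZFlow_two_of_hasNZFlow_three hdeg h))

end SignedGraph

namespace SignedGraph.Gdbl

variable {t : ℕ}

-- Typed as `(Gdbl t).V` rather than `Fin t ⊕ Fin t`, so that `ends e b = x j` is decidable
-- through the instance `DecidableEq (Gdbl t).V`.
abbrev x (i : Fin t) : (Gdbl t).V := Sum.inl i

abbrev y (i : Fin t) : (Gdbl t).V := Sum.inr i

variable (t) in
def fourFlowOrientation : (Gdbl t).E → Bool → ℤ := fun e b =>
  match e with
  | .inl i => if b then 1 else if i.val = 0 then 1 else -1
  | .inr (.inl i) => if b then (if i.val = 0 then -1 else 1) else -1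
  | .inr (.inr (.inl _)) => -1
  | .inr (.inr (.inr i)) => if b then 1 else if i.val = 0 then -1 else 1

variable (t) in
def fourFlow : (Gdbl t).E → ℤ := fun e =>
  match e with
  | .inl _ => 2
  | .inr (.inl _) => 1
  | .inr (.inr (.inl _)) => 1
  | .inr (.inr (.inr i)) => if i.val = 0 then 3 else 1

lemma isOrientation_fourFlowOrientation : (Gdbl t).IsOrientation (fourFlowOrientation t) := by
  constructor
  · rintro (i | i | i | i) b <;> simp only [fourFlowOrientation] <;> (try split_ifs) <;> simp
  · rintro (i | i | i | i) <;>
      simp only [fourFlowOrientation, Gdbl, if_true, Bool.false_eq_true, if_false] <;>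
      (try split_ifs) <;> simp

variable [NeZero t]

lemma succ_mod_eq_add_one (i : Fin t) :
    (⟨(i.val + 1) % t, Nat.mod_lt _ i.pos⟩ : Fin t) = i + 1 := by
  ext
  simp [Fin.val_add]

lemma sum_incident_x {M : Type} [AddCommMonoid M] (F : (Gdbl t).E → Bool → M) (j : Fin t) :
    (∑ e : (Gdbl t).E, ∑ b : Bool, if (Gdbl t).ends e b = x j then F e b else 0) =
      F (.inl j) true + F (.inl (j - 1)) false + F (.inr (.inr (.inl j))) false +
        F (.inr (.inr (.inr (j - 1)))) false := by
  show (∑ e : Fin t ⊕ (Fin t ⊕ (Fin t ⊕ Fin t)), ∑ b : Bool,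
      if (Gdbl t).ends e b = x j then F e b else 0) = _
  simp only [Fintype.sum_sum_type, Fintype.sum_bool, Gdbl, succ_mod_eq_add_one, Sum.inl.injEq,
    ← eq_sub_iff_add_eq, reduceCtorEq, if_false, if_true]
  simp [Finset.sum_add_distrib, Finset.sum_ite_eq']
  abel

lemma sum_incident_y {M : Type} [AddCommMonoid M] (F : (Gdbl t).E → Bool → M) (j : Fin t) :
    (∑ e : (Gdbl t).E, ∑ b : Bool, if (Gdbl t).ends e b = y j then F e b else 0) =
      F (.inr (.inl j)) true + F (.inr (.inl (j - 1))) false + F (.inr (.inr (.inl j))) true +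
        F (.inr (.inr (.inr j))) true := by
  show (∑ e : Fin t ⊕ (Fin t ⊕ (Fin t ⊕ Fin t)), ∑ b : Bool,
      if (Gdbl t).ends e b = y j then F e b else 0) = _
  simp only [Fintype.sum_sum_type, Fintype.sum_bool, Gdbl, succ_mod_eq_add_one, Sum.inr.injEq,
    ← eq_sub_iff_add_eq, reduceCtorEq, if_false, if_true]
  simp [Finset.sum_add_distrib, Finset.sum_ite_eq']
  abel

lemma deg_eq_four (v : (Gdbl t).V) : (Gdbl t).deg v = 4 := by
  have h := (Gdbl t).sum_incident_eq_sum_filter (fun _ _ => (1 : ℕ)) v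
  rw [Finset.sum_const, smul_eq_mul, mul_one] at h
  rw [deg, ← h]
  rcases v with j | j
  · rw [sum_incident_x]
  · rw [sum_incident_y]

lemma card_negative_edges :
    (Finset.univ.filter fun e => (Gdbl t).sign e = -1).card = 2 * t + 1 := by
  rw [Finset.card_filter]
  show ∑ e : Fin t ⊕ (Fin t ⊕ (Fin t ⊕ Fin t)), (if (Gdbl t).sign e = -1 then 1 else 0) = _
  simp only [Fintype.sum_sum_type, Gdbl, apply_ite (· = (-1 : ℤ)), Fin.val_eq_zero_iff]
  simp [Finset.sum_ite_eq', Finset.sum_ite, Finset.filter_ne']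
  have := NeZero.ne t
  omega

lemma isFlow_fourFlow : (Gdbl t).IsFlow (fourFlowOrientation t) (fourFlow t) := by
  refine ⟨isOrientation_fourFlowOrientation, ?_⟩
  rintro (j | j)
  · rw [sum_incident_x]
    by_cases h : (j - 1).val = 0 <;> simp [fourFlowOrientation, fourFlow, h]
  · rw [sum_incident_y]
    by_cases h : j.val = 0 <;> simp [fourFlowOrientation, fourFlow, h]

lemma hasNZFlow_four : (Gdbl t).HasNZFlow 4 := by
  refine ⟨fourFlowOrientation t, fourFlow t, ⟨isFlow_fourFlow, fun e => ?_⟩, fun e => ?_⟩ <;>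
    rcases e with i | i | i | i <;> simp only [fourFlow] <;> (try split_ifs) <;> norm_num

end SignedGraph.Gdbl

open SignedGraph in
/-- For every `t ≥ 4`, `(G_{2t},σ)` is flow-admissible and admits a
nowhere-zero 4-flow but no nowhere-zero 3-flow. -/
theorem Gdbl_four_flow_no_three_flow :
    ∀ t : ℕ, 4 ≤ t →
      (Gdbl t).FlowAdmissible ∧ (Gdbl t).HasNZFlow 4 ∧ ¬ (Gdbl t).HasNZFlow 3 := by
  intro t ht
  have : NeZero t := ⟨by omega⟩
  have hodd : Odd (Finset.univ.filter fun e => (Gdbl t).sign e = -1).card := by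
    rw [Gdbl.card_negative_edges]
    exact odd_two_mul_add_one t
  exact ⟨⟨4, by norm_num, Gdbl.hasNZFlow_four⟩, Gdbl.hasNZFlow_four,
    not_hasNZFlow_three_of_deg_eq_four Gdbl.deg_eq_four hodd⟩
end

section
/- Let (G,σ) be a signed graph and H a subgraph of G. If ⟨H⟩₂ = (G,σ), then (G,σ) admits a ℤ3-flow φ such that every edge of E(G) \ E(H) lies in supp(φ). -/
namespace SignedGraph

variable (G : SignedGraph)

/-- The `Φ₂`-closure of the subgraph with edge set `F` is all of `G`: there is a
finite sequence of balanced circuits, each having at most two edges outside `F`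
together with the previously added circuits, whose union with `F` covers `E(G)`. -/
def Phi2Reaches (F : Set G.E) : Prop :=
  ∃ (k : ℕ) (C : Fin k → Set G.E),
    (∀ i : Fin k, ∃ (n : ℕ) (v : Fin n → G.V) (e : Fin n → G.E),
      G.BalancedCircuit n v e ∧ C i = Set.range e ∧
      (Set.range e \ (F ∪ ⋃ j : Fin k, ⋃ _ : j < i, C j)).ncard ≤ 2) ∧
    F ∪ (⋃ i, C i) = Set.univ

end SignedGraph


lemma exists_avoid (s : Set (ZMod 3)) (h : s.ncard ≤ 2) : ∃ c, c ∉ s := by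
  by_contra hc
  push_neg at hc
  have he : s = Set.univ := Set.eq_univ_of_forall hc
  rw [he, Set.ncard_univ, Nat.card_eq_fintype_card, ZMod.card] at h
  omega

lemma greedy {α : Type} (k : ℕ) (u : Fin k → α → ZMod 3) (N : Fin k → Set α)
    (hfin : ∀ i, (N i).Finite) (hN : ∀ i, (N i).ncard ≤ 2)
    (hunit : ∀ i, ∀ a ∈ N i, u i a ≠ 0)
    (hzero : ∀ j i : Fin k, ∀ a ∈ N i, j < i → u j a = 0) :
    ∃ c : Fin k → ZMod 3, ∀ i, ∀ a ∈ N i, (∑ j, c j * u j a) ≠ 0 := by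
  haveI : Fact (Nat.Prime 3) := ⟨by norm_num⟩
  induction k with
  | zero => exact ⟨fun _ => 0, fun i => i.elim0⟩
  | succ m ih =>
    obtain ⟨c', hc'⟩ := ih (fun j a => u j.succ a) (fun j => N j.succ)
      (fun j => hfin _) (fun j => hN _)
      (fun j a ha => hunit _ a ha)
      (fun j i a ha hj => hzero _ _ a ha (by simpa using hj))
    set B : Set (ZMod 3) :=
      (fun a => -(∑ j : Fin m, c' j * u j.succ a) / u 0 a) '' (N 0) with hB
    obtain ⟨c0, hc0⟩ := exists_avoid B (le_trans (Set.ncard_image_le (hfin 0)) (hN 0))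
    refine ⟨Fin.cons c0 c', ?_⟩
    intro i a ha
    rw [Fin.sum_univ_succ]
    simp only [Fin.cons_zero, Fin.cons_succ]
    induction i using Fin.cases with
    | zero =>
      intro heq
      apply hc0
      refine ⟨a, ha, ?_⟩
      show _ / _ = c0
      rw [div_eq_iff (hunit 0 a ha)]
      linear_combination -heq
    | succ i =>
      rw [hzero 0 i.succ a ha (Fin.succ_pos i)]
      simpa using hc' i a ha

open Finset in
lemma circuit_flow (G : SignedGraph) (n : ℕ) (v : Fin n → G.V) (e : Fin n → G.E)
    (hc : G.BalancedCircuit n v e) :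
    ∃ d : G.E → Bool → ℤ,
      (∀ x b, x ∉ Set.range e → d x b = 0) ∧
      (∀ x, x ∈ Set.range e → d x true = 1 ∨ d x true = -1) ∧
      (∀ x, d x false = -G.sign x * d x true) ∧
      (∀ w : G.V, (∑ x : G.E, ∑ b : Bool, if G.ends x b = w then d x b else 0) = 0) := by
  classical
  obtain ⟨⟨hn, hvinj, heinj, hends⟩, hbal⟩ := hc
  obtain ⟨m, rfl⟩ : ∃ m, n = m + 1 := ⟨n - 1, by omega⟩
  have hβ : ∀ i, ∃ b : Bool, G.ends (e i) b = v i ∧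
      G.ends (e i) (!b) = v (finRotate (m+1) i) := by
    intro i
    rcases hends i with ⟨h1, h2⟩ | ⟨h1, h2⟩
    · exact ⟨true, h1, h2⟩
    · exact ⟨false, h2, h1⟩
  choose β hβ1 hβ2 using hβ
  set sgn : ℕ → ℤ := fun j => if h : j < m + 1 then G.sign (e ⟨j, h⟩) else 1 with hsgn
  have hsgnu : ∀ j, sgn j = 1 ∨ sgn j = -1 := by
    intro j; rw [hsgn]; dsimp only; split
    · exact G.sign_unit _
    · exact Or.inl rfl
  have hsgne : ∀ i : Fin (m+1), sgn i.val = G.sign (e i) := by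
    intro i; rw [hsgn]; dsimp only; rw [dif_pos i.isLt]
  set X : Fin (m+1) → ℤ := fun i => ∏ j ∈ Finset.range i.val, sgn j with hX
  have hXu : ∀ i, X i = 1 ∨ X i = -1 := by
    intro i
    rw [← Int.isUnit_iff]
    exact Finset.prod_induction _ _ (fun a b ha hb => ha.mul hb) isUnit_one
      (fun j _ => Int.isUnit_iff.mpr (hsgnu j))
  have hprodall : ∏ j ∈ Finset.range (m+1), sgn j = 1 := by
    rw [← Fin.prod_univ_eq_prod_range]
    rw [← hbal]
    exact Finset.prod_congr rfl fun i _ => by rw [hsgne]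
  have hXrot : ∀ i, X (finRotate (m+1) i) = G.sign (e i) * X i := by
    intro i
    rw [finRotate_succ_apply]
    by_cases hi : i.val = m
    · have h0 : i + 1 = 0 := by
        have : i = Fin.last m := Fin.ext hi
        rw [this, Fin.last_add_one]
      rw [h0]
      have : X 0 = 1 := by rw [hX]; simp
      rw [this, hX]
      dsimp only
      rw [← hsgne i, mul_comm, ← Finset.prod_range_succ, hi, hprodall]
    · have hlt : (i + 1).val = i.val + 1 :=
        Fin.val_add_one_of_lt (by rw [Fin.lt_iff_val_lt_val, Fin.val_last]; omega)
      rw [hX]; dsimp only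
      rw [hlt, Finset.prod_range_succ, hsgne i, mul_comm]
  set d : G.E → Bool → ℤ := fun x b =>
    ∑ i : Fin (m+1), if e i = x then
      (if b = β i then X i else -G.sign (e i) * X i) else 0 with hd
  have hde : ∀ i b, d (e i) b = if b = β i then X i else -G.sign (e i) * X i := by
    intro i b
    rw [hd]; dsimp only
    rw [Finset.sum_eq_single i]
    · rw [if_pos rfl]
    · intro j _ hj; rw [if_neg (fun hh => hj (heinj hh))]
    · intro hcon; exact absurd (Finset.mem_univ i) hcon
  have hnegu : ∀ i, -G.sign (e i) * X i = 1 ∨ -G.sign (e i) * X i = -1 := by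
    intro i
    rcases G.sign_unit (e i) with h | h <;> rcases hXu i with h' | h' <;>
      rw [h, h'] <;> norm_num
  have hd0 : ∀ x b, x ∉ Set.range e → d x b = 0 := by
    intro x b hx
    rw [hd]; dsimp only
    exact Finset.sum_eq_zero fun i _ => if_neg (fun hh => hx ⟨i, hh⟩)
  refine ⟨d, hd0, ?_, ?_, ?_⟩
  · rintro x ⟨i, rfl⟩
    rw [hde]
    split
    · exact hXu i
    · exact hnegu i
  · intro x
    by_cases hx : x ∈ Set.range e
    · obtain ⟨i, rfl⟩ := hx
      rw [hde, hde]
      cases hb : β i with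
      | true =>
        rw [if_neg (by simp), if_pos rfl]
      | false =>
        rw [if_pos rfl, if_neg (by simp)]
        rcases G.sign_unit (e i) with h | h <;> rw [h] <;> ring
    · rw [hd0 x false hx, hd0 x true hx, mul_zero]
  · intro w
    have hcollapse : ∀ b : Bool,
        (∑ x : G.E, if G.ends x b = w then d x b else 0)
          = ∑ i : Fin (m+1), if G.ends (e i) b = w then d (e i) b else 0 := by
      intro b
      have h1 : (∑ i : Fin (m+1), if G.ends (e i) b = w then d (e i) b else 0)
          = ∑ x ∈ Finset.univ.image e, (if G.ends x b = w then d x b else 0) :=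
        (Finset.sum_image (f := fun x => if G.ends x b = w then d x b else 0)
          (g := e) (fun i _ j _ h => heinj h)).symm
      rw [h1]
      refine (Finset.sum_subset (Finset.subset_univ _) ?_).symm
      intro x _ hx
      have hxr : x ∉ Set.range e := by
        intro ⟨i, hi⟩
        exact hx (Finset.mem_image.mpr ⟨i, Finset.mem_univ i, hi⟩)
      rw [hd0 x b hxr, ite_self]
    rw [Finset.sum_comm]
    have : ∀ b : Bool, (∑ x : G.E, if G.ends x b = w then d x b else 0)
        = ∑ i : Fin (m+1), if G.ends (e i) b = w then d (e i) b else 0 := hcollapse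
    rw [Fintype.sum_bool, hcollapse true, hcollapse false, ← Finset.sum_add_distrib]
    have hterm : ∀ i : Fin (m+1),
        ((if G.ends (e i) true = w then d (e i) true else 0) +
         (if G.ends (e i) false = w then d (e i) false else 0))
        = (if v i = w then X i else 0) +
          (if v (finRotate (m+1) i) = w then -(X (finRotate (m+1) i)) else 0) := by
      intro i
      have h1 := hβ1 i
      have h2 := hβ2 i
      have hrx : -(X (finRotate (m+1) i)) = -G.sign (e i) * X i := by
        rw [hXrot i]; ring
      rw [hde i true, hde i false, hrx]
      cases hb : β i with
      | true =>
        rw [hb] at h1 h2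
        simp only [Bool.not_true] at h2
        simp [h1, h2]
      | false =>
        rw [hb] at h1 h2
        simp only [Bool.not_false] at h2
        simp [h1, h2]
        ring
    rw [Finset.sum_congr rfl (fun i _ => hterm i), Finset.sum_add_distrib]
    have hre : (∑ i : Fin (m+1), if v (finRotate (m+1) i) = w
        then -(X (finRotate (m+1) i)) else 0)
        = ∑ i : Fin (m+1), if v i = w then -(X i) else 0 :=
      Equiv.sum_comp (finRotate (m+1)) (fun i => if v i = w then -(X i) else 0)
    rw [hre, ← Finset.sum_add_distrib]
    refine Finset.sum_eq_zero fun i _ => ?_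
    split <;> ring

open SignedGraph in

open SignedGraph in
/-- Zýka. If the `Φ₂`-closure of a subgraph `H` (with edge set `F`)
of a signed graph `(G,σ)` is all of `(G,σ)`, then `(G,σ)` admits a `ℤ₃`-flow `φ`
with `E(G) \ E(H) ⊆ supp(φ)`. -/
theorem phi2_closure_Z3_flow (G : SignedGraph) (F : Set G.E)
    (h : G.Phi2Reaches F) :
    ∃ (τ : G.E → Bool → ℤ) (φ : G.E → ZMod 3),
      G.IsFlow τ φ ∧ ∀ e, e ∉ F → φ e ≠ 0 := by
  classical
  obtain ⟨k, C, hC, hcov⟩ := h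
  choose n v e hbal hCeq hnew using hC
  choose d hd0 hd1 hd2 hd3 using fun i => circuit_flow G (n i) (v i) (e i) (hbal i)
  set N : Fin k → Set G.E :=
    fun i => C i \ (F ∪ ⋃ j, ⋃ _ : j < i, C j) with hN
  have hNcard : ∀ i, (N i).ncard ≤ 2 := by
    intro i
    rw [hN]; dsimp only
    rw [hCeq i]
    exact hnew i
  obtain ⟨c, hc⟩ := greedy k (fun i x => ((d i x true : ℤ) : ZMod 3)) N
    (fun i => Set.toFinite _) hNcard
    (by
      intro i a ha
      show ((d i a true : ℤ) : ZMod 3) ≠ 0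
      have har : a ∈ Set.range (e i) := by rw [← hCeq i]; exact ha.1
      rcases hd1 i a har with h1 | h1 <;> rw [h1] <;> norm_num)
    (by
      intro j i a ha hj
      show ((d j a true : ℤ) : ZMod 3) = 0
      have haj : a ∉ C j := fun hCj =>
        ha.2 (Or.inr (Set.mem_iUnion.mpr ⟨j, Set.mem_iUnion.mpr ⟨hj, hCj⟩⟩))
      rw [hCeq j] at haj
      rw [hd0 j a true haj]
      simp)
  refine ⟨fun x b => if b then 1 else -G.sign x,
    fun x => ∑ j, c j * ((d j x true : ℤ) : ZMod 3), ⟨⟨?_, ?_⟩, ?_⟩, ?_⟩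
  · intro x b
    cases b
    · rcases G.sign_unit x with h | h <;> simp [h]
    · simp
  · intro x; simp
  · intro w
    have hsmul : ∀ (x : G.E) (b : Bool),
        ((if b then (1:ℤ) else -G.sign x) • (∑ j, c j * ((d j x true : ℤ) : ZMod 3)))
          = ∑ j, c j * ((d j x b : ℤ) : ZMod 3) := by
      intro x b
      cases b
      · rw [if_neg (by simp), zsmul_eq_mul, Finset.mul_sum]
        refine Finset.sum_congr rfl fun j _ => ?_
        rw [hd2 j x]
        push_cast
        ring
      · rw [if_pos rfl, one_smul]
    have step1 : (∑ x : G.E, ∑ b : Bool,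
        if G.ends x b = w then
          (if b then (1:ℤ) else -G.sign x) • (∑ j, c j * ((d j x true : ℤ) : ZMod 3)) else 0)
        = ∑ x : G.E, ∑ b : Bool, ∑ j : Fin k,
            (if G.ends x b = w then c j * ((d j x b : ℤ) : ZMod 3) else 0) := by
      refine Finset.sum_congr rfl fun x _ => Finset.sum_congr rfl fun b _ => ?_
      rw [hsmul]
      split
      · rfl
      · simp
    rw [step1]
    have step2 : (∑ x : G.E, ∑ b : Bool, ∑ j : Fin k,
        (if G.ends x b = w then c j * ((d j x b : ℤ) : ZMod 3) else 0))
        = ∑ j : Fin k, ∑ x : G.E, ∑ b : Bool,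
            (if G.ends x b = w then c j * ((d j x b : ℤ) : ZMod 3) else 0) := by
      calc (∑ x : G.E, ∑ b : Bool, ∑ j : Fin k,
              (if G.ends x b = w then c j * ((d j x b : ℤ) : ZMod 3) else 0))
          = ∑ x : G.E, ∑ j : Fin k, ∑ b : Bool,
              (if G.ends x b = w then c j * ((d j x b : ℤ) : ZMod 3) else 0) :=
            Finset.sum_congr rfl fun x _ => Finset.sum_comm
        _ = ∑ j : Fin k, ∑ x : G.E, ∑ b : Bool,
              (if G.ends x b = w then c j * ((d j x b : ℤ) : ZMod 3) else 0) :=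
            Finset.sum_comm
    rw [step2]
    refine Finset.sum_eq_zero fun j _ => ?_
    have step3 : (∑ x : G.E, ∑ b : Bool,
        (if G.ends x b = w then c j * ((d j x b : ℤ) : ZMod 3) else 0))
        = c j * (((∑ x : G.E, ∑ b : Bool,
            if G.ends x b = w then d j x b else 0 : ℤ)) : ZMod 3) := by
      push_cast
      rw [Finset.mul_sum]
      refine Finset.sum_congr rfl fun x _ => ?_
      rw [Finset.mul_sum]
      refine Finset.sum_congr rfl fun b _ => ?_
      split
      · rfl
      · simp
    rw [step3, hd3 j w]
    simp
  · intro x hxF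
    have hxU : x ∈ ⋃ i, C i := by
      have : x ∈ F ∪ ⋃ i, C i := by rw [hcov]; trivial
      rcases this with h | h
      · exact absurd h hxF
      · exact h
    obtain ⟨i, hi⟩ := Set.mem_iUnion.mp hxU
    have hsne : (Finset.univ.filter fun j => x ∈ C j).Nonempty := ⟨i, by simp [hi]⟩
    have hmem : x ∈ N ((Finset.univ.filter fun j => x ∈ C j).min' hsne) := by
      constructor
      · have := Finset.min'_mem _ hsne
        simpa using this
      · rintro (hxf | hxj)
        · exact hxF hxf
        · obtain ⟨j, hj⟩ := Set.mem_iUnion.mp hxj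
          obtain ⟨hjlt, hjx⟩ := Set.mem_iUnion.mp hj
          have hle : (Finset.univ.filter fun j => x ∈ C j).min' hsne ≤ j :=
            Finset.min'_le _ j (by simp [hjx])
          exact absurd hjlt (not_lt.mpr hle)
    exact hc _ x hmem
end

section
/- Let k ≥ 3 be an integer, let C be a balanced circuit of a signed graph (G,σ), let g be an integer 2-flow of (G,σ) with supp(g) = E(C), and let f1 be an integer k-flow of (G,σ) such that |supp(f1) ∩ E(C)| ≤ k − 2 and |f1(e)| ≤ k/2 for each e ∈ E(C). Then there exists α ∈ {±1, ±2, …, ±⌊k/2⌋} such that f2 = f1 − α·g is an integer k-flow with supp(f2) = supp(f1) ∪ E(C). -/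
open SignedGraph in
/-- Let `k ≥ 3`, let `C` be a balanced circuit, `g` a 2-flow with
`supp(g) = E(C)` and `f₁` an integer `k`-flow with `|supp(f₁) ∩ E(C)| ≤ k − 2` and
`|f₁(e)| ≤ k/2` on `E(C)`.  Then there is `α ∈ {±1, …, ±⌊k/2⌋}` such that
`f₂ = f₁ − α·g` is an integer `k`-flow with `supp(f₂) = supp(f₁) ∪ E(C)`. -/
theorem extend_flow_along_balanced_circuit (G : SignedGraph)
    (k : ℕ) (hk : 3 ≤ k)
    (n : ℕ) (v : Fin n → G.V) (e : Fin n → G.E) (hC : G.BalancedCircuit n v e)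
    (τ : G.E → Bool → ℤ) (g : G.E → ℤ) (hg : G.IsIntFlow 2 τ g)
    (hgsupp : ∀ x, g x ≠ 0 ↔ x ∈ Set.range e)
    (f1 : G.E → ℤ) (hf1 : G.IsFlow τ f1) (hf1k : ∀ x, |f1 x| < (k : ℤ))
    (hsupp : ({x : G.E | f1 x ≠ 0} ∩ Set.range e).ncard ≤ k - 2)
    (hhalf : ∀ x ∈ Set.range e, 2 * |f1 x| ≤ (k : ℤ)) :
    ∃ α : ℤ, α ≠ 0 ∧ 2 * |α| ≤ (k : ℤ) ∧
      G.IsIntFlow (k : ℤ) τ (fun x => f1 x - α * g x) ∧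
      ∀ x, f1 x - α * g x ≠ 0 ↔ (f1 x ≠ 0 ∨ x ∈ Set.range e) := by
  classical
  obtain ⟨⟨hτ, hgflow⟩, hg2⟩ := hg
  obtain ⟨hτ2, hf1flow⟩ := hf1
  have hgpm : ∀ x, x ∈ Set.range e → g x = 1 ∨ g x = -1 := by
    intro x hx
    have h1 : g x ≠ 0 := (hgsupp x).2 hx
    have h2 := abs_lt.mp (hg2 x)
    omega
  have hg0 : ∀ x, x ∉ Set.range e → g x = 0 := by
    intro x hx
    by_contra h
    exact hx ((hgsupp x).1 h)
  -- flows are closed under this operation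
  have hflow2 : ∀ α : ℤ, G.IsFlow τ (fun x => f1 x - α * g x) := by
    intro α
    refine ⟨hτ, fun w => ?_⟩
    have h1 := hf1flow w
    have h2 := hgflow w
    have key : (∑ x : G.E, ∑ b : Bool, if G.ends x b = w then τ x b • (f1 x - α * g x) else 0)
        = (∑ x : G.E, ∑ b : Bool, if G.ends x b = w then τ x b • f1 x else 0)
          - α * (∑ x : G.E, ∑ b : Bool, if G.ends x b = w then τ x b • g x else 0) := by
      rw [Finset.mul_sum, ← Finset.sum_sub_distrib]
      refine Finset.sum_congr rfl fun x _ => ?_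
      rw [Finset.mul_sum, ← Finset.sum_sub_distrib]
      refine Finset.sum_congr rfl fun b _ => ?_
      by_cases h : G.ends x b = w
      · simp only [h, if_true, smul_eq_mul]; ring
      · simp [h]
    rw [key, h1, h2]
    ring
  set S : Finset G.E := Finset.univ.filter (fun x => f1 x ≠ 0 ∧ x ∈ Set.range e) with hSdef
  have hScard : S.card ≤ k - 2 := by
    have hEq : ({x : G.E | f1 x ≠ 0} ∩ Set.range e) = ↑S := by
      ext x
      simp [hSdef, Set.mem_inter_iff]
    rw [hEq, Set.ncard_coe_finset] at hsupp
    exact hsupp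
  have hmemS : ∀ x, x ∈ S ↔ (f1 x ≠ 0 ∧ x ∈ Set.range e) := by
    intro x
    simp [hSdef]
  have pigeon : ∀ (A B : Finset ℤ), B.card < A.card → ∃ α ∈ A, α ∉ B := by
    intro A B h
    by_contra hc
    push_neg at hc
    exact absurd (Finset.card_le_card hc) (not_le.mpr h)
  set m : ℕ := k / 2 with hmdef
  have hm1 : 1 ≤ m := by omega
  -- obtain a good α
  obtain ⟨α, hα0, hαk, hαne, hαbd⟩ :
      ∃ α : ℤ, α ≠ 0 ∧ 2 * |α| ≤ (k : ℤ) ∧ (∀ x ∈ S, α ≠ f1 x * g x) ∧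
        (∀ x ∈ S, |f1 x| + |α| < (k : ℤ)) := by
    by_cases hex : ∃ x ∈ S, 2 * |f1 x| = (k : ℤ)
    · obtain ⟨x0, hx0S, hx0⟩ := hex
      have hax0 : 0 ≤ |f1 x0| := abs_nonneg _
      have hkeq : (k : ℤ) = 2 * ((m : ℤ)) := by
        have : (k : ℤ) = 2 * |f1 x0| := hx0.symm
        omega
      have hm2 : 2 ≤ m := by omega
      set A : Finset ℤ := (Finset.Icc (-(m : ℤ) + 1) ((m : ℤ) - 1)).erase 0 with hAdef
      set B : Finset ℤ := (S.erase x0).image (fun x => f1 x * g x) with hBdef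
      have hAcard : A.card = 2 * m - 2 := by
        rw [hAdef, Finset.card_erase_of_mem (by rw [Finset.mem_Icc]; omega)]
        rw [Int.card_Icc]
        omega
      have hBcard : B.card < A.card := by
        have h1 : B.card ≤ (S.erase x0).card := Finset.card_image_le
        have h2 : (S.erase x0).card = S.card - 1 := Finset.card_erase_of_mem hx0S
        have h3 : 1 ≤ S.card := Finset.card_pos.mpr ⟨x0, hx0S⟩
        omega
      obtain ⟨α, hαA, hαB⟩ := pigeon A B hBcard
      rw [hAdef] at hαA
      have hα0 : α ≠ 0 := (Finset.mem_erase.mp hαA).1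
      have hαle : |α| ≤ (m : ℤ) - 1 := by
        have := Finset.mem_Icc.mp (Finset.mem_erase.mp hαA).2
        rw [abs_le]
        omega
      refine ⟨α, hα0, by omega, ?_, ?_⟩
      · intro x hxS
        by_cases hx : x = x0
        · subst hx
          intro h
          have hg1 : |g x| = 1 := by rcases hgpm x ((hmemS x).mp hxS).2 with h' | h' <;> simp [h']
          have : |f1 x * g x| = |f1 x| := by rw [abs_mul, hg1, mul_one]
          rw [← h] at this
          omega
        · intro h
          exact hαB (Finset.mem_image.mpr ⟨x, Finset.mem_erase.mpr ⟨hx, hxS⟩, h.symm⟩)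
      · intro x hxS
        have := hhalf x ((hmemS x).mp hxS).2
        omega
    · push_neg at hex
      set A : Finset ℤ := (Finset.Icc (-(m : ℤ)) (m : ℤ)).erase 0 with hAdef
      set B : Finset ℤ := S.image (fun x => f1 x * g x) with hBdef
      have hAcard : A.card = 2 * m := by
        rw [hAdef, Finset.card_erase_of_mem (by rw [Finset.mem_Icc]; omega)]
        rw [Int.card_Icc]
        omega
      have hBcard : B.card < A.card := by
        have h1 : B.card ≤ S.card := Finset.card_image_le
        omega
      obtain ⟨α, hαA, hαB⟩ := pigeon A B hBcard
      rw [hAdef] at hαA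
      have hα0 : α ≠ 0 := (Finset.mem_erase.mp hαA).1
      have hαle : |α| ≤ (m : ℤ) := by
        have := Finset.mem_Icc.mp (Finset.mem_erase.mp hαA).2
        rw [abs_le]
        omega
      have hmk : 2 * (m : ℤ) ≤ (k : ℤ) := by
        have : 2 * m ≤ k := by omega
        exact_mod_cast this
      refine ⟨α, hα0, by omega, ?_, ?_⟩
      · intro x hxS h
        exact hαB (Finset.mem_image.mpr ⟨x, hxS, h.symm⟩)
      · intro x hxS
        have h1 := hhalf x ((hmemS x).mp hxS).2
        have h2 := hex x hxS
        omega
  -- now assemble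
  refine ⟨α, hα0, hαk, ⟨hflow2 α, ?_⟩, ?_⟩
  · intro x
    show |f1 x - α * g x| < (k : ℤ)
    by_cases hx : x ∈ Set.range e
    · rcases hgpm x hx with hgx | hgx
      · by_cases hS : x ∈ S
        · have := hαbd x hS
          rw [hgx]
          have h1 := abs_sub_abs_le_abs_sub (f1 x) (α * 1)
          have h2 := abs_sub (f1 x) (α * 1)
          simp only [mul_one] at *
          have := abs_sub_le_iff.mp (le_refl |f1 x - α|)
          have h3 : |f1 x - α| ≤ |f1 x| + |α| := abs_sub _ _
          omega
        · have hf0 : f1 x = 0 := by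
            by_contra h
            exact hS ((hmemS x).mpr ⟨h, hx⟩)
          rw [hf0, hgx]
          simp only [zero_sub, abs_neg, mul_one]
          omega
      · by_cases hS : x ∈ S
        · have := hαbd x hS
          rw [hgx]
          have h3 : |f1 x - α * (-1)| ≤ |f1 x| + |α| := by
            have := abs_sub (f1 x) (α * (-1))
            simpa using this
          omega
        · have hf0 : f1 x = 0 := by
            by_contra h
            exact hS ((hmemS x).mpr ⟨h, hx⟩)
          rw [hf0, hgx]
          simp only [zero_sub, abs_neg]
          rw [abs_mul]
          simp
          omega
    · rw [hg0 x hx]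
      simpa using hf1k x
  · intro x
    by_cases hx : x ∈ Set.range e
    · simp only [hx, or_true, iff_true]
      rcases hgpm x hx with hgx | hgx <;> rw [hgx]
      · by_cases hf0 : f1 x = 0
        · rw [hf0]; simpa using hα0
        · have := hαne x ((hmemS x).mpr ⟨hf0, hx⟩)
          rw [hgx] at this
          simp only [mul_one] at this ⊢
          omega
      · by_cases hf0 : f1 x = 0
        · rw [hf0]; simp; omega
        · have := hαne x ((hmemS x).mpr ⟨hf0, hx⟩)
          rw [hgx] at this
          omega
    · rw [hg0 x hx]
      simp [hx]
end

section
/- Let C be a balanced circuit of a signed graph (G,σ) of length at most 4, and let g be an integer 2-flow of (G,σ) with supp(g) = E(C). Then for any ℤ3-flow φ of (G,σ) there exists α ∈ ℤ3 such that φ1 = φ − α·g is a ℤ3-flow satisfying |E_{φ1=0} ∩ E(C)| ∈ {0, |E(C)| − 2}. -/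
open SignedGraph in
/-- Let `C` be a balanced circuit of length at most 4 and `g` a
2-flow with `supp(g) = E(C)`.  For any `ℤ₃`-flow `φ` there is `α ∈ ℤ₃` such that
`φ₁ = φ − α·g` is a `ℤ₃`-flow with `|E_{φ₁=0} ∩ E(C)| ∈ {0, |E(C)| − 2}`. -/
theorem shift_Z3_flow_on_short_circuit (G : SignedGraph)
    (n : ℕ) (hn : n ≤ 4) (v : Fin n → G.V) (e : Fin n → G.E)
    (hC : G.BalancedCircuit n v e)
    (τ : G.E → Bool → ℤ) (g : G.E → ℤ) (hg : G.IsIntFlow 2 τ g)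
    (hgsupp : ∀ x, g x ≠ 0 ↔ x ∈ Set.range e)
    (φ : G.E → ZMod 3) (hφ : G.IsFlow τ φ) :
    ∃ α : ZMod 3,
      G.IsFlow τ (fun x => φ x - α * ((g x : ZMod 3))) ∧
      (({x : G.E | φ x - α * ((g x : ZMod 3)) = 0} ∩ Set.range e).ncard = 0 ∨
       ({x : G.E | φ x - α * ((g x : ZMod 3)) = 0} ∩ Set.range e).ncard = n - 2) := by
  classical
  -- on circuit edges, g = ±1
  have hgpm : ∀ x, x ∈ Set.range e → g x = 1 ∨ g x = -1 := by
    intro x hx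
    have h1 := (hgsupp x).2 hx
    have h2 := hg.2 x
    rw [abs_lt] at h2
    omega
  have hgsq : ∀ x, x ∈ Set.range e → ((g x : ZMod 3)) * ((g x : ZMod 3)) = 1 := by
    intro x hx
    rcases hgpm x hx with h | h <;> rw [h] <;> decide
  -- every shift is a flow
  have hflow : ∀ α : ZMod 3, G.IsFlow τ (fun x => φ x - α * (g x : ZMod 3)) := by
    intro α
    refine ⟨hφ.1, fun w => ?_⟩
    have hgz : (∑ x, ∑ b, if G.ends x b = w then τ x b • ((g x : ZMod 3)) else 0) = 0 := by
      have h := hg.1.2 w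
      calc (∑ x, ∑ b, if G.ends x b = w then τ x b • ((g x : ZMod 3)) else 0)
          = ((∑ x, ∑ b, if G.ends x b = w then τ x b • g x else 0 : ℤ) : ZMod 3) := by
            push_cast
            refine Finset.sum_congr rfl fun x _ => Finset.sum_congr rfl fun b _ => ?_
            split
            · push_cast [zsmul_eq_mul]; ring
            · rfl
        _ = 0 := by rw [h]; rfl
    have hφz := hφ.2 w
    calc (∑ x, ∑ b, if G.ends x b = w then τ x b • (φ x - α * (g x : ZMod 3)) else 0)
        = (∑ x, ∑ b, ((if G.ends x b = w then τ x b • φ x else 0)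
            - α * (if G.ends x b = w then τ x b • ((g x : ZMod 3)) else 0))) := by
          refine Finset.sum_congr rfl fun x _ => Finset.sum_congr rfl fun b _ => ?_
          split
          · simp only [zsmul_eq_mul]; ring
          · simp
      _ = 0 := by
          simp only [Finset.sum_sub_distrib, ← Finset.mul_sum]
          rw [hφz, hgz, mul_zero, sub_zero]
  -- counting
  set E0 : Finset G.E := Finset.univ.image e with hE0
  have hmem : ∀ x, x ∈ E0 ↔ x ∈ Set.range e := by
    intro x; simp [hE0]
  have hE0card : E0.card = n := by
    rw [hE0, Finset.card_image_of_injective _ hC.1.2.2.1, Finset.card_univ, Fintype.card_fin]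
  set k : ZMod 3 → ℕ := fun α => (E0.filter fun x => φ x * (g x : ZMod 3) = α).card with hk
  have hfib : ∑ α : ZMod 3, k α = n := by
    rw [← hE0card]
    exact (Finset.card_eq_sum_card_fiberwise (fun x _ => Finset.mem_univ _)).symm
  have huniv : (Finset.univ : Finset (ZMod 3)) = {0, 1, 2} := by decide
  rw [huniv] at hfib
  have hsum3 : k 0 + k 1 + k 2 = n := by
    rw [show ({0, 1, 2} : Finset (ZMod 3)) = insert 0 (insert 1 {2}) from rfl] at hfib
    rw [Finset.sum_insert (by decide), Finset.sum_insert (by decide),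
      Finset.sum_singleton] at hfib
    omega
  -- the set equality
  have hsetα : ∀ α : ZMod 3, {x : G.E | φ x - α * ((g x : ZMod 3)) = 0} ∩ Set.range e
      = ↑(E0.filter fun x => φ x * (g x : ZMod 3) = α) := by
    intro α
    ext x
    simp only [Set.mem_inter_iff, Set.mem_setOf_eq, Finset.coe_filter, Set.mem_setOf_eq,
      hmem, sub_eq_zero]
    constructor
    · rintro ⟨h1, h2⟩
      refine ⟨h2, ?_⟩
      rw [h1, mul_assoc, hgsq x h2, mul_one]
    · rintro ⟨h1, h2⟩
      refine ⟨?_, h1⟩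
      have : φ x * ((g x : ZMod 3) * (g x : ZMod 3)) = α * (g x : ZMod 3) := by
        rw [← mul_assoc, h2]
      rwa [hgsq x h1, mul_one] at this
  have hncard : ∀ α : ZMod 3,
      ({x : G.E | φ x - α * ((g x : ZMod 3)) = 0} ∩ Set.range e).ncard = k α := by
    intro α
    rw [hsetα α, Set.ncard_coe_finset]
  have hcase : k 0 = 0 ∨ k 0 = n - 2 ∨ k 1 = 0 ∨ k 1 = n - 2 ∨ k 2 = 0 ∨ k 2 = n - 2 := by
    omega
  rcases hcase with h | h | h | h | h | h
  · exact ⟨0, hflow 0, Or.inl (by rw [hncard]; exact h)⟩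
  · exact ⟨0, hflow 0, Or.inr (by rw [hncard]; exact h)⟩
  · exact ⟨1, hflow 1, Or.inl (by rw [hncard]; exact h)⟩
  · exact ⟨1, hflow 1, Or.inr (by rw [hncard]; exact h)⟩
  · exact ⟨2, hflow 2, Or.inl (by rw [hncard]; exact h)⟩
  · exact ⟨2, hflow 2, Or.inr (by rw [hncard]; exact h)⟩
end

section
/- Let f be a ℤ3-flow of a signed graph (G,σ) and let H = T1T2⋯Tm be a triangle-path in G such that every triangle Ti (1 ≤ i ≤ m) is balanced. Then for any edge e0 ∈ E(H) there is a ℤ3-flow g of (G,σ) satisfying: (1) f(e) = g(e) for every edge e ∉ E(H); and (2) g(e) ≠ 0 for every edge e ∈ E(H) \ {e0}. -/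
namespace SignedGraph

lemma choose_c (a1 a2 u1 u2 : ZMod 3) (h1 : u1 ≠ 0) (h2 : u2 ≠ 0) :
    ∃ c : ZMod 3, a1 + c * u1 ≠ 0 ∧ a2 + c * u2 ≠ 0 := by
  revert a1 a2 u1 u2; decide

lemma exists_beta (G : SignedGraph) {e : G.E} {u w : G.V} (h : G.EdgeEnds e u w) :
    ∃ β : Bool, G.ends e β = u ∧ G.ends e (!β) = w := by
  rcases h with ⟨h1, h2⟩ | ⟨h1, h2⟩
  · exact ⟨true, h1, h2⟩
  · exact ⟨false, h2, h1⟩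

lemma bool_pair {M : Type*} [AddCommMonoid M] (F : Bool → M) (β : Bool) :
    (∑ b : Bool, F b) = F β + F (!β) := by cases β <;> simp [add_comm]

lemma flow_add_smul (G : SignedGraph) (τ : G.E → Bool → ℤ) (f φ : G.E → ZMod 3)
    (hf : G.IsFlow τ f) (hφ : G.IsFlow τ φ) (c : ZMod 3) :
    G.IsFlow τ (fun e => f e + c * φ e) := by
  refine ⟨hf.1, fun v => ?_⟩
  have h1 := hf.2 v
  have h2 := hφ.2 v
  have : (∑ e : G.E, ∑ b : Bool, if G.ends e b = v then τ e b • (f e + c * φ e) else 0)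
      = (∑ e : G.E, ∑ b : Bool, if G.ends e b = v then τ e b • f e else 0)
      + c * (∑ e : G.E, ∑ b : Bool, if G.ends e b = v then τ e b • φ e else 0) := by
    rw [Finset.mul_sum, ← Finset.sum_add_distrib]
    refine Finset.sum_congr rfl fun e _ => ?_
    rw [Finset.mul_sum, ← Finset.sum_add_distrib]
    refine Finset.sum_congr rfl fun b _ => ?_
    by_cases h : G.ends e b = v <;> simp [h, zsmul_eq_mul] <;> ring
  rw [this, h1, h2, mul_zero, add_zero]

end SignedGraph
namespace SignedGraph

lemma exists_triangle_flow (G : SignedGraph) (τ : G.E → Bool → ℤ)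
    (hτ : G.IsOrientation τ) (T : Finset G.E) (hT : G.BalancedTriangle T) :
    ∃ φ : G.E → ZMod 3, G.IsFlow τ φ ∧ (∀ e ∈ T, φ e ≠ 0) ∧ (∀ e ∉ T, φ e = 0) := by
  classical
  obtain ⟨⟨a, b, c, e1, e2, e3, hab, hbc, hac, h12, h23, h13, hTeq, hE1, hE2, hE3⟩, hbalT⟩ := hT
  obtain ⟨β1, hβ1a, hβ1b⟩ := G.exists_beta hE1
  obtain ⟨β2, hβ2b, hβ2c⟩ := G.exists_beta hE2
  obtain ⟨β3, hβ3a, hβ3c⟩ := G.exists_beta hE3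
  set s1 := τ e1 β1 with hs1def
  set s1' := τ e1 (!β1) with hs1'def
  set s2 := τ e2 β2 with hs2def
  set s2' := τ e2 (!β2) with hs2'def
  set s3 := τ e3 β3 with hs3def
  set s3' := τ e3 (!β3) with hs3'def
  have hu1 : s1 = 1 ∨ s1 = -1 := hτ.1 e1 β1
  have hu1' : s1' = 1 ∨ s1' = -1 := hτ.1 e1 (!β1)
  have hu2 : s2 = 1 ∨ s2 = -1 := hτ.1 e2 β2
  have hu2' : s2' = 1 ∨ s2' = -1 := hτ.1 e2 (!β2)
  have hu3 : s3 = 1 ∨ s3 = -1 := hτ.1 e3 β3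
  have hu3' : s3' = 1 ∨ s3' = -1 := hτ.1 e3 (!β3)
  have hp1 : s1 * s1' = -G.sign e1 := by
    cases β1 <;> simp [hs1def, hs1'def] <;> linarith [hτ.2 e1]
  have hp2 : s2 * s2' = -G.sign e2 := by
    cases β2 <;> simp [hs2def, hs2'def] <;> linarith [hτ.2 e2]
  have hp3 : s3 * s3' = -G.sign e3 := by
    cases β3 <;> simp [hs3def, hs3'def] <;> linarith [hτ.2 e3]
  have hbal : G.sign e1 * G.sign e2 * G.sign e3 = 1 := by
    rw [hTeq] at hbalT
    rw [Finset.prod_insert (by simp [h12, h13]), Finset.prod_insert (by simp [h23]),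
      Finset.prod_singleton] at hbalT
    linear_combination hbalT
  set y2 : ℤ := -(s1' * s2) with hy2def
  set y3 : ℤ := -(s1 * s3) with hy3def
  have Ea : s1 * 1 + s3 * y3 = 0 := by
    rcases hu1 with h | h <;> rcases hu3 with h' | h' <;> rw [hy3def, h, h'] <;> ring
  have Eb : s1' * 1 + s2 * y2 = 0 := by
    rcases hu1' with h | h <;> rcases hu2 with h' | h' <;> rw [hy2def, h, h'] <;> ring
  have key : s1' * G.sign e2 + s1 * G.sign e3 = 0 := by
    rcases hu1 with h | h <;> rcases hu1' with h' | h' <;>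
      rcases G.sign_unit e2 with a2 | a2 <;> rcases G.sign_unit e3 with a3 | a3 <;>
      rw [h, h'] at hp1 <;> rw [h, h', a2, a3] <;> rw [a2, a3] at hbal <;>
      norm_num at hp1 hbal ⊢ <;> omega
  have Ec : s2' * y2 + s3' * y3 = 0 := by
    rw [hy2def, hy3def]
    linear_combination (-s1') * hp2 + (-s1) * hp3 + key
  have hy2u : y2 = 1 ∨ y2 = -1 := by
    rcases hu1' with h | h <;> rcases hu2 with h' | h' <;> rw [hy2def, h, h'] <;> norm_num
  have hy3u : y3 = 1 ∨ y3 = -1 := by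
    rcases hu1 with h | h <;> rcases hu3 with h' | h' <;> rw [hy3def, h, h'] <;> norm_num
  set φ : G.E → ZMod 3 := fun e => if e = e1 then ((1 : ℤ) : ZMod 3)
    else if e = e2 then ((y2 : ℤ) : ZMod 3)
    else if e = e3 then ((y3 : ℤ) : ZMod 3) else 0 with hφdef
  have hφ1 : φ e1 = ((1 : ℤ) : ZMod 3) := by simp [hφdef]
  have hφ2 : φ e2 = ((y2 : ℤ) : ZMod 3) := by simp [hφdef, Ne.symm h12]
  have hφ3 : φ e3 = ((y3 : ℤ) : ZMod 3) := by simp [hφdef, Ne.symm h13, Ne.symm h23]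
  have hφ0 : ∀ e, e ≠ e1 → e ≠ e2 → e ≠ e3 → φ e = 0 := by
    intro e k1 k2 k3; simp [hφdef, k1, k2, k3]
  have EaC : (s1 : ZMod 3) * ((1 : ℤ) : ZMod 3) + (s3 : ZMod 3) * ((y3 : ℤ) : ZMod 3) = 0 := by
    exact_mod_cast congrArg (fun t : ℤ => (t : ZMod 3)) Ea
  have EbC : (s1' : ZMod 3) * ((1 : ℤ) : ZMod 3) + (s2 : ZMod 3) * ((y2 : ℤ) : ZMod 3) = 0 := by
    exact_mod_cast congrArg (fun t : ℤ => (t : ZMod 3)) Eb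
  have EcC : (s2' : ZMod 3) * ((y2 : ℤ) : ZMod 3) + (s3' : ZMod 3) * ((y3 : ℤ) : ZMod 3) = 0 := by
    exact_mod_cast congrArg (fun t : ℤ => (t : ZMod 3)) Ec
  refine ⟨φ, ⟨hτ, ?_⟩, ?_, ?_⟩
  · intro v
    have hz : ∀ e ∈ (Finset.univ : Finset G.E), e ∉ ({e1, e2, e3} : Finset G.E) →
        (∑ bb : Bool, if G.ends e bb = v then τ e bb • φ e else 0) = 0 := by
      intro e _ he
      simp only [Finset.mem_insert, Finset.mem_singleton, not_or] at he
      simp [hφ0 e he.1 he.2.1 he.2.2]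
    have edge_sum : ∀ (e : G.E) (u w : G.V) (β : Bool), G.ends e β = u → G.ends e (!β) = w →
        (∑ bb : Bool, if G.ends e bb = v then τ e bb • φ e else 0)
          = (if u = v then τ e β • φ e else 0) + (if w = v then τ e (!β) • φ e else 0) := by
      intro e u w β hβu hβw
      rw [bool_pair (fun bb => if G.ends e bb = v then τ e bb • φ e else 0) β]
      rw [hβu, hβw]
    rw [← Finset.sum_subset (Finset.subset_univ ({e1, e2, e3} : Finset G.E)) hz]
    rw [Finset.sum_insert (by simp [h12, h13]), Finset.sum_insert (by simp [h23]),
      Finset.sum_singleton, edge_sum e1 a b β1 hβ1a hβ1b, edge_sum e2 b c β2 hβ2b hβ2c,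
      edge_sum e3 a c β3 hβ3a hβ3c, hφ1, hφ2, hφ3]
    simp only [zsmul_eq_mul]
    by_cases hva : a = v <;> by_cases hvb : b = v <;> by_cases hvc : c = v
    · exact absurd (hva.trans hvb.symm) hab
    · exact absurd (hva.trans hvb.symm) hab
    · exact absurd (hva.trans hvc.symm) hac
    · simp only [if_pos hva, if_neg hvb, if_neg hvc]
      rw [add_zero, zero_add, add_zero, zero_add]
      exact EaC
    · exact absurd (hvb.trans hvc.symm) hbc
    · simp only [if_pos hvb, if_neg hva, if_neg hvc]
      rw [zero_add, add_zero, add_zero, add_zero]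
      exact EbC
    · simp only [if_pos hvc, if_neg hva, if_neg hvb]
      rw [zero_add, zero_add, zero_add, zero_add]
      exact EcC
    · simp [if_neg hva, if_neg hvb, if_neg hvc]
  · intro e he
    rw [hTeq] at he
    simp only [Finset.mem_insert, Finset.mem_singleton] at he
    rcases he with rfl | rfl | rfl
    · rw [hφ1]; decide
    · rw [hφ2]; rcases hy2u with h | h <;> rw [h] <;> decide
    · rw [hφ3]; rcases hy3u with h | h <;> rw [h] <;> decide
  · intro e he
    rw [hTeq] at he
    simp only [Finset.mem_insert, Finset.mem_singleton, not_or] at he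
    exact hφ0 e he.1 he.2.1 he.2.2

end SignedGraph
namespace SignedGraph

lemma triangle_two (G : SignedGraph) {T : Finset G.E} (hT : G.IsTriangle T) {e0 : G.E}
    (he0 : e0 ∈ T) :
    ∃ d1 d2, d1 ∈ T ∧ d2 ∈ T ∧ ∀ d ∈ T, d ≠ e0 → d = d1 ∨ d = d2 := by
  obtain ⟨a, b, c, e1, e2, e3, _, _, _, _, _, _, hTeq, _, _, _⟩ := hT
  subst hTeq
  simp only [Finset.mem_insert, Finset.mem_singleton] at he0
  rcases he0 with rfl | rfl | rfl
  · refine ⟨e2, e3, by simp, by simp, ?_⟩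
    intro d hd hne
    simp only [Finset.mem_insert, Finset.mem_singleton] at hd
    rcases hd with rfl | rfl | rfl <;> tauto
  · refine ⟨e1, e3, by simp, by simp, ?_⟩
    intro d hd hne
    simp only [Finset.mem_insert, Finset.mem_singleton] at hd
    rcases hd with rfl | rfl | rfl <;> tauto
  · refine ⟨e1, e2, by simp, by simp, ?_⟩
    intro d hd hne
    simp only [Finset.mem_insert, Finset.mem_singleton] at hd
    rcases hd with rfl | rfl | rfl <;> tauto

lemma trianglePath_reindex (G : SignedGraph) {m m' : ℕ} (T : Fin m → Finset G.E)
    (h : G.IsTrianglePath m T) (σ : Fin m' → Fin m) (hm' : 0 < m')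
    (hd : ∀ i j : Fin m', ((σ i : ℕ) : ℤ) - ((σ j : ℕ) : ℤ) = ((i : ℕ) : ℤ) - ((j : ℕ) : ℤ) ∨
          ((σ i : ℕ) : ℤ) - ((σ j : ℕ) : ℤ) = ((j : ℕ) : ℤ) - ((i : ℕ) : ℤ)) :
    G.IsTrianglePath m' (fun j => T (σ j)) := by
  obtain ⟨hm, htri, hinj, hcons, hfar⟩ := h
  have hσinj : Function.Injective σ := by
    intro i j hij
    have h2 := hd i j
    rw [hij] at h2
    exact Fin.ext (by omega)
  refine ⟨hm', fun j => htri _, fun i j hij => hσinj (hinj hij), ?_, ?_⟩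
  · intro i j hij
    rcases hd j i with hh | hh
    · exact hcons (σ i) (σ j) (by omega)
    · rw [Finset.inter_comm]
      exact hcons (σ j) (σ i) (by omega)
  · intro i j hij
    rcases hd j i with hh | hh
    · exact hfar (σ i) (σ j) (by omega)
    · rw [Finset.inter_comm]
      exact hfar (σ j) (σ i) (by omega)

lemma core (G : SignedGraph) (τ : G.E → Bool → ℤ) :
    ∀ (m : ℕ) (T : Fin m → Finset G.E), G.IsTrianglePath m T →
    (∀ i, G.BalancedTriangle (T i)) →
    ∀ f : G.E → ZMod 3, G.IsFlow τ f →
    ∀ e0 : G.E, ∀ hm : 0 < m, e0 ∈ T ⟨m - 1, Nat.sub_lt hm one_pos⟩ →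
    ∃ g : G.E → ZMod 3, G.IsFlow τ g ∧
      (∀ x, (∀ i, x ∉ T i) → f x = g x) ∧
      (∀ x, (∃ i, x ∈ T i) → x ≠ e0 → g x ≠ 0) := by
  intro m
  induction m with
  | zero => intro T _ _ f _ e0 hm; omega
  | succ n ih =>
    intro T hpath hbal f hf e0 hm he0
    rcases Nat.eq_zero_or_pos n with rfl | hn
    · -- base case : a single triangle
      obtain ⟨φ, hφflow, hφnz, hφz⟩ :=
        G.exists_triangle_flow τ hf.1 (T ⟨0, hm⟩) (hbal ⟨0, hm⟩)
      obtain ⟨d1, d2, hd1, hd2, hcov⟩ := G.triangle_two (hbal ⟨0, hm⟩).1 he0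
      obtain ⟨c, hc1, hc2⟩ :=
        choose_c (f d1) (f d2) (φ d1) (φ d2) (hφnz d1 hd1) (hφnz d2 hd2)
      refine ⟨fun e => f e + c * φ e, G.flow_add_smul τ f φ hf hφflow c, ?_, ?_⟩
      · intro x hx
        show f x = f x + c * φ x
        rw [hφz x (hx ⟨0, hm⟩), mul_zero, add_zero]
      · rintro x ⟨i, hxi⟩ hne
        have hi : i = ⟨0, hm⟩ := Fin.ext (by omega)
        rw [hi] at hxi
        rcases hcov x hxi hne with rfl | rfl
        · exact hc1
        · exact hc2
    · -- inductive step : n ≥ 1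
      have hprevlt : n - 1 < n + 1 := by omega
      have hlastlt : n < n + 1 := by omega
      set prev : Fin (n + 1) := ⟨n - 1, hprevlt⟩ with hprevdef
      set last : Fin (n + 1) := ⟨n, hlastlt⟩ with hlastdef
      -- the prefix path
      set T' : Fin n → Finset G.E := fun j => T ⟨j.val, by omega⟩ with hT'def
      have hpath' : G.IsTrianglePath n T' := by
        refine G.trianglePath_reindex T hpath (fun j => ⟨j.val, by omega⟩) hn ?_
        intro i j; left; simp
      -- the shared edge of the last two triangles
      have hcard : (T prev ∩ T last).card = 1 := by
        refine hpath.2.2.2.1 prev last ?_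
        show (n : ℕ) = n - 1 + 1
        omega
      obtain ⟨x0, hx0⟩ := Finset.card_eq_one.mp hcard
      have hx0prev : x0 ∈ T prev := by
        have : x0 ∈ T prev ∩ T last := by rw [hx0]; exact Finset.mem_singleton_self x0
        exact Finset.mem_of_mem_inter_left this
      have hx0last : x0 ∈ T last := by
        have : x0 ∈ T prev ∩ T last := by rw [hx0]; exact Finset.mem_singleton_self x0
        exact Finset.mem_of_mem_inter_right this
      have hx0' : x0 ∈ T' ⟨n - 1, Nat.sub_lt hn one_pos⟩ := by
        have : T' ⟨n - 1, Nat.sub_lt hn one_pos⟩ = T prev := rfl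
        rw [this]; exact hx0prev
      obtain ⟨g1, hg1flow, hg1eq, hg1nz⟩ :=
        ih T' hpath' (fun i => hbal _) f hf x0 hn hx0'
      -- the triangle flow on the last triangle
      obtain ⟨φ, hφflow, hφnz, hφz⟩ :=
        G.exists_triangle_flow τ hf.1 (T last) (hbal last)
      have he0' : e0 ∈ T last := by
        have : (⟨n + 1 - 1, Nat.sub_lt hm one_pos⟩ : Fin (n + 1)) = last :=
          Fin.ext (by show n + 1 - 1 = n; omega)
        rwa [this] at he0
      obtain ⟨d1, d2, hd1, hd2, hcov⟩ := G.triangle_two (hbal last).1 he0'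
      obtain ⟨c, hc1, hc2⟩ :=
        choose_c (g1 d1) (g1 d2) (φ d1) (φ d2) (hφnz d1 hd1) (hφnz d2 hd2)
      refine ⟨fun e => g1 e + c * φ e, G.flow_add_smul τ g1 φ hg1flow hφflow c, ?_, ?_⟩
      · intro x hx
        show f x = g1 x + c * φ x
        rw [hφz x (hx last), mul_zero, add_zero]
        exact hg1eq x fun j => hx _
      · rintro x ⟨i, hxi⟩ hne
        by_cases hxl : x ∈ T last
        · rcases hcov x hxl hne with rfl | rfl
          · exact hc1
          · exact hc2
        · show g1 x + c * φ x ≠ 0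
          rw [hφz x hxl, mul_zero, add_zero]
          have hilt : i.val < n := by
            rcases Nat.lt_or_ge i.val n with h' | h'
            · exact h'
            · exfalso
              have : i = last := Fin.ext (by show (i : ℕ) = n; omega)
              rw [this] at hxi
              exact hxl hxi
          have hxT' : x ∈ T' ⟨i.val, hilt⟩ := by
            have : T' ⟨i.val, hilt⟩ = T ⟨i.val, by omega⟩ := rfl
            rw [this]
            have h2 : (⟨i.val, by omega⟩ : Fin (n + 1)) = i := Fin.ext rfl
            rw [h2]; exact hxi
          refine hg1nz x ⟨⟨i.val, hilt⟩, hxT'⟩ ?_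
          intro hxx0
          rw [hxx0] at hxl
          exact hxl hx0last

end SignedGraph
open SignedGraph in
/-- Let `f` be a `ℤ₃`-flow and `H = T₁T₂⋯T_m` a triangle-path all
of whose triangles are balanced.  For any `e₀ ∈ E(H)` there is a `ℤ₃`-flow `g` with
`g = f` off `E(H)` and `g ≠ 0` on `E(H) \ {e₀}`. -/
theorem shift_zero_along_balanced_triangle_path (G : SignedGraph)
    (τ : G.E → Bool → ℤ) (f : G.E → ZMod 3) (hf : G.IsFlow τ f)
    (m : ℕ) (T : Fin m → Finset G.E) (hT : G.IsTrianglePath m T)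
    (hbal : ∀ i, G.BalancedTriangle (T i))
    (e0 : G.E) (he0 : ∃ i, e0 ∈ T i) :
    ∃ g : G.E → ZMod 3, G.IsFlow τ g ∧
      (∀ x, (∀ i, x ∉ T i) → f x = g x) ∧
      (∀ x, (∃ i, x ∈ T i) → x ≠ e0 → g x ≠ 0) := by
  obtain ⟨k, hk⟩ := he0
  have hm : 0 < m := hT.1
  have hkm : (k : ℕ) < m := k.isLt
  -- Stage A : the prefix T₀, …, T_k, with e₀ in its last triangle
  set m1 : ℕ := (k : ℕ) + 1 with hm1def
  have hm1 : 0 < m1 := by omega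
  set σA : Fin m1 → Fin m := fun j => ⟨j.val, by omega⟩ with hσAdef
  have hpathA : G.IsTrianglePath m1 (fun j => T (σA j)) := by
    refine G.trianglePath_reindex T hT σA hm1 ?_
    intro i j; left; rfl
  have hσAlast : σA ⟨m1 - 1, Nat.sub_lt hm1 one_pos⟩ = k := Fin.ext (by
    show (k : ℕ) + 1 - 1 = (k : ℕ); omega)
  have he0A : e0 ∈ (fun j => T (σA j)) ⟨m1 - 1, Nat.sub_lt hm1 one_pos⟩ := by
    show e0 ∈ T (σA ⟨m1 - 1, Nat.sub_lt hm1 one_pos⟩)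
    rw [hσAlast]; exact hk
  obtain ⟨g1, hg1flow, hg1eq, hg1nz⟩ :=
    G.core τ m1 (fun j => T (σA j)) hpathA (fun i => hbal _) f hf e0 hm1 he0A
  -- Stage B : the reversed suffix T_{m-1}, …, T_k, with e₀ in its last triangle
  set m2 : ℕ := m - (k : ℕ) with hm2def
  have hm2 : 0 < m2 := by omega
  set σB : Fin m2 → Fin m := fun j => ⟨m - 1 - j.val, by omega⟩ with hσBdef
  have hpathB : G.IsTrianglePath m2 (fun j => T (σB j)) := by
    refine G.trianglePath_reindex T hT σB hm2 ?_
    intro i j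
    have hi := i.isLt
    have hj := j.isLt
    right
    show ((m - 1 - (i : ℕ) : ℕ) : ℤ) - ((m - 1 - (j : ℕ) : ℕ) : ℤ) = ((j : ℕ) : ℤ) - ((i : ℕ) : ℤ)
    omega
  have hσBlast : σB ⟨m2 - 1, Nat.sub_lt hm2 one_pos⟩ = k := Fin.ext (by
    show m - 1 - (m - (k : ℕ) - 1) = (k : ℕ); omega)
  have he0B : e0 ∈ (fun j => T (σB j)) ⟨m2 - 1, Nat.sub_lt hm2 one_pos⟩ := by
    show e0 ∈ T (σB ⟨m2 - 1, Nat.sub_lt hm2 one_pos⟩)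
    rw [hσBlast]; exact hk
  obtain ⟨g, hgflow, hgeq, hgnz⟩ :=
    G.core τ m2 (fun j => T (σB j)) hpathB (fun i => hbal _) g1 hg1flow e0 hm2 he0B
  refine ⟨g, hgflow, ?_, ?_⟩
  · intro x hx
    rw [hg1eq x fun j => hx _]
    exact hgeq x fun j => hx _
  · rintro x ⟨i, hxi⟩ hne
    by_cases hB : ∃ j : Fin m2, x ∈ T (σB j)
    · exact hgnz x hB hne
    · push_neg at hB
      rw [← hgeq x hB]
      have hik : (i : ℕ) < m1 := by
        by_contra hcon
        push_neg at hcon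
        have hjlt : m - 1 - (i : ℕ) < m2 := by omega
        have : σB ⟨m - 1 - (i : ℕ), hjlt⟩ = i := Fin.ext (by
          show m - 1 - (m - 1 - (i : ℕ)) = (i : ℕ); omega)
        exact hB ⟨m - 1 - (i : ℕ), hjlt⟩ (by rw [this]; exact hxi)
      have hAi : σA ⟨(i : ℕ), hik⟩ = i := Fin.ext rfl
      refine hg1nz x ⟨⟨(i : ℕ), hik⟩, ?_⟩ hne
      show x ∈ T (σA ⟨(i : ℕ), hik⟩)
      rw [hAi]; exact hxi
end

section
/- The signed wheel (W5,σ*) admits a nowhere-zero integer 5-flow but admits no nowhere-zero integer 4-flow. -/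
namespace SignedGraph

/-- The signed wheel `(W₅, σ*)`: hub `0` joined to the five vertices of a 5-cycle,
spokes (`Sum.inl`) positive, rim edges (`Sum.inr`) negative. -/
def W5 : SignedGraph where
  V := Fin 6
  E := Fin 5 ⊕ Fin 5
  fintypeV := inferInstance
  fintypeE := inferInstance
  decV := inferInstance
  decE := inferInstance
  ends := fun e b =>
    match e, b with
    | Sum.inl _, true => (0 : Fin 6)
    | Sum.inl i, false => ⟨i.val + 1, by have := i.isLt; omega⟩
    | Sum.inr i, true => ⟨i.val + 1, by have := i.isLt; omega⟩
    | Sum.inr i, false => ⟨(i.val + 1) % 5 + 1, by have := i.isLt; omega⟩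
  sign := fun e => match e with | Sum.inl _ => 1 | Sum.inr _ => -1
  sign_unit := by rintro (i | i)
                  · exact Or.inl rfl
                  · exact Or.inr rfl

/-- `G` and `H` are isomorphic as signed graphs, up to switching:
there are bijections of vertices and edges preserving incidence, and a switching
function `s` transforming the signature of `G` into that of `H`. -/
def SwitchIso (G H : SignedGraph) : Prop :=
  ∃ (φV : G.V ≃ H.V) (φE : G.E ≃ H.E) (s : G.V → ℤ),
    (∀ v, s v = 1 ∨ s v = -1) ∧
    (∀ e, (H.ends (φE e) true = φV (G.ends e true) ∧ H.ends (φE e) false = φV (G.ends e false)) ∨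
          (H.ends (φE e) true = φV (G.ends e false) ∧ H.ends (φE e) false = φV (G.ends e true))) ∧
    (∀ e, H.sign (φE e) = s (G.ends e true) * s (G.ends e false) * G.sign e)

end SignedGraph

/-!
At a rim vertex of `(W₅, σ*)` the two incident rim edges are negative, so in any flow the spoke
there carries the sum `a j + a (j - 1)` of the values of its two rim edges, and conservation at
the hub gives `2 ∑ a = 0`. In a nowhere-zero integer 4-flow the five rim values and their five
adjacent sums would all lie in `{±1, ±2, ±3}` with `∑ a = 0`, and a finite check shows that no
cyclic sequence of length five does this. Rim values `3, -1, 2, -3, -1` do give a nowhere-zero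
5-flow.
-/

lemma not_forall_adjacent_sum_small (a : Fin 5 → ℤ) (hsum : ∑ i, a i = 0)
    (ha : ∀ i, a i ≠ 0 ∧ |a i| < 4) : ¬ ∀ i, a i + a (i - 1) ≠ 0 ∧ |a i + a (i - 1)| < 4 := by
  intro hadj
  rw [Fin.sum_univ_five] at hsum
  obtain ⟨ha0, ha0'⟩ := ha 0
  obtain ⟨ha1, ha1'⟩ := ha 1
  obtain ⟨ha2, ha2'⟩ := ha 2
  obtain ⟨ha3, ha3'⟩ := ha 3
  obtain ⟨ha4, ha4'⟩ := ha 4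
  obtain ⟨hs0, hs0'⟩ : a 0 + a 4 ≠ 0 ∧ |a 0 + a 4| < 4 := hadj 0
  obtain ⟨hs1, hs1'⟩ : a 1 + a 0 ≠ 0 ∧ |a 1 + a 0| < 4 := hadj 1
  obtain ⟨hs2, hs2'⟩ : a 2 + a 1 ≠ 0 ∧ |a 2 + a 1| < 4 := hadj 2
  obtain ⟨hs3, hs3'⟩ : a 3 + a 2 ≠ 0 ∧ |a 3 + a 2| < 4 := hadj 3
  obtain ⟨hs4, hs4'⟩ : a 4 + a 3 ≠ 0 ∧ |a 4 + a 3| < 4 := hadj 4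
  simp only [abs_lt] at *
  omega

namespace SignedGraph

lemma IsOrientation.apply_false {G : SignedGraph} {τ : G.E → Bool → ℤ} (hτ : G.IsOrientation τ)
    (e : G.E) : τ e false = -G.sign e * τ e true := by
  rw [← hτ.2 e]
  rcases hτ.1 e true with h | h <;> rw [h] <;> ring

lemma IsOrientation.abs_mul {G : SignedGraph} {τ : G.E → Bool → ℤ} (hτ : G.IsOrientation τ)
    (e : G.E) (b : Bool) (x : ℤ) : |τ e b * x| = |x| := by
  rcases hτ.1 e b with h | h <;> simp [h]

lemma W5.sum_edges {M : Type*} [AddCommMonoid M] (g : W5.E → M) :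
    ∑ e, g e = ∑ i, g (Sum.inl i) + ∑ i, g (Sum.inr i) :=
  Fintype.sum_sum_type g

/-- The same at both ends of the rim edge, as rim edges are negative. -/
def W5.rimValue (τ : W5.E → Bool → ℤ) (f : W5.E → ℤ) (j : Fin 5) : ℤ :=
  τ (Sum.inr j) true * f (Sum.inr j)

section W5Flow

variable {τ : W5.E → Bool → ℤ} {f : W5.E → ℤ}

lemma IsFlow.W5_sum_spokes (h : W5.IsFlow τ f) :
    ∑ j : Fin 5, τ (Sum.inl j) true * f (Sum.inl j) = 0 := by
  have hv := h.2 (0 : Fin 6)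
  rw [W5.sum_edges] at hv
  simpa [W5, Fin.sum_univ_five] using hv

lemma IsFlow.W5_spoke_eq (h : W5.IsFlow τ f) (j : Fin 5) :
    τ (Sum.inl j) true * f (Sum.inl j) = W5.rimValue τ f j + W5.rimValue τ f (j - 1) := by
  have hspoke (i : Fin 5) : τ (Sum.inl i) false = -τ (Sum.inl i) true := by
    simpa [W5] using h.1.apply_false (Sum.inl i)
  have hrim (i : Fin 5) : τ (Sum.inr i) false = τ (Sum.inr i) true := by
    simpa [W5] using h.1.apply_false (Sum.inr i)
  have hv := h.2 j.succ
  rw [W5.sum_edges] at hv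
  fin_cases j <;>
    simp [W5, W5.rimValue, Fin.sum_univ_five, hspoke, hrim, show (-1 : Fin 5) = 4 from rfl]
      at hv ⊢ <;>
    linarith

lemma IsFlow.W5_sum_rimValue (h : W5.IsFlow τ f) : ∑ j, W5.rimValue τ f j = 0 := by
  have hshift : ∑ j, W5.rimValue τ f (j - 1) = ∑ j, W5.rimValue τ f j :=
    (Equiv.subRight (1 : Fin 5)).sum_comp (W5.rimValue τ f)
  have h2 : 2 * ∑ j, W5.rimValue τ f j = 0 := by
    rw [← h.W5_sum_spokes, Finset.sum_congr rfl fun j _ => h.W5_spoke_eq j,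
      Finset.sum_add_distrib, hshift, two_mul]
  omega

end W5Flow

lemma W5_hasNZFlow_five : W5.HasNZFlow 5 :=
  ⟨fun e b => match e with
    | Sum.inl _ => if b then 1 else -1
    | Sum.inr _ => 1,
   fun e => match e with
    | Sum.inl j => ![3, -1, 2, -3, -1] j + ![3, -1, 2, -3, -1] (j - 1)
    | Sum.inr j => ![3, -1, 2, -3, -1] j,
   ⟨⟨by unfold IsOrientation; decide, by decide⟩, by decide⟩, by unfold NowhereZero; decide⟩

lemma W5_not_hasNZFlow_four : ¬ W5.HasNZFlow 4 := by
  rintro ⟨τ, f, ⟨hflow, hbound⟩, hnz⟩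
  have hsmall : ∀ e b, τ e b * f e ≠ 0 ∧ |τ e b * f e| < 4 := fun e b => by
    rw [← abs_ne_zero, hflow.1.abs_mul]
    exact ⟨abs_ne_zero.2 (hnz e), hbound e⟩
  refine not_forall_adjacent_sum_small (W5.rimValue τ f) hflow.W5_sum_rimValue
    (fun j => hsmall _ _) fun j => ?_
  rw [← hflow.W5_spoke_eq j]
  exact hsmall _ _

end SignedGraph

open SignedGraph in
/-- `(W₅,σ*)` admits a nowhere-zero integer 5-flow
but no nowhere-zero integer 4-flow. -/
theorem W5_five_flow_no_four_flow :
    W5.HasNZFlow 5 ∧ ¬ W5.HasNZFlow 4 :=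
  ⟨W5_hasNZFlow_five, W5_not_hasNZFlow_four⟩
end
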